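/- arXiv:2403.18368 — 2 statements merged into one kernel-verified Lean document; each statement's English description precedes it below -/
import Mathlib

section
/- Let X be a separable metric space with a locally finite Borel measure μ whose support is all of X, N ≥ 1, and K : X × X → ℝ^{N×N} a bounded continuous kernel with K(x,y) = K(y,x)ᵀ for all x, y. If K is integrally positive definite with respect to C(X,ℝ^N) ∩ L¹(X,ℝ^N), i.e., ∫_X∫_X f(x)ᵀ K(x,y) f(y) dμ(x) dμ(y) ≥ 0 for every continuous integrable f : X → ℝ^N, then K is positive definite: for all n, x₁,…,xₙ ∈ X, c₁,…,cₙ ∈ ℝ^N, ∑_{i,j} cᵢᵀ K(xᵢ,xⱼ) cⱼ ≥ 0. -/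
/-! Let `g_{x,ε}` be the tent `max (1 - d(·, x)/ε) 0` normalized to a probability density; for
small `ε` this makes sense because balls have positive and, locally, finite measure. Testing
integral positivity against `f = ∑ᵢ g_{xᵢ,ε} cᵢ`, the double integral expands into
`∑ᵢⱼ ∫∫ g_{xᵢ,ε}(a) g_{xⱼ,ε}(b) cᵢᵀ K(a,b) cⱼ`. Each `g_{xᵢ,ε} ⊗ g_{xⱼ,ε}` is a probability
density on `X × X` concentrating at `(xᵢ, xⱼ)`, so by continuity of `K` the term tends to
`cᵢᵀ K(xᵢ,xⱼ) cⱼ` as `ε → 0`, and the quadratic form is a limit of nonnegative numbers.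
Separability makes `μ` σ-finite, which is what Fubini needs. -/

open MeasureTheory Matrix

/-- Frobenius norm of a real `N × N` matrix. -/
noncomputable def frobNorm {N : ℕ} (A : Matrix (Fin N) (Fin N) ℝ) : ℝ :=
  Real.sqrt (∑ i : Fin N, ∑ j : Fin N, (A i j) ^ 2)

open Filter Function Metric Set Topology

section ProbabilityDensity

variable {Y : Type*} [MeasurableSpace Y] {ν : Measure Y} {ρ φ : Y → ℝ}

structure IsProbabilityDensity (ν : Measure Y) (ρ : Y → ℝ) : Prop where
  nonneg : 0 ≤ ρ
  integrable : Integrable ρ ν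
  integral_eq_one : ∫ y, ρ y ∂ν = 1

lemma MeasureTheory.Integrable.mul_of_abs_le_on_support (hρ : Integrable ρ ν)
    (hφ : AEStronglyMeasurable φ ν) {C : ℝ} (hC : ∀ y ∈ support ρ, |φ y| ≤ C) :
    Integrable (fun y => ρ y * φ y) ν := by
  refine (hρ.norm.mul_const C).mono' (hρ.aestronglyMeasurable.mul hφ) (ae_of_all _ fun y => ?_)
  by_cases hy : ρ y = 0
  · simp [hy]
  · rw [norm_mul, Real.norm_eq_abs (φ y)]
    exact mul_le_mul_of_nonneg_left (hC y hy) (norm_nonneg _)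

lemma IsProbabilityDensity.abs_integral_mul_sub_le (hρ : IsProbabilityDensity ν ρ)
    (hρφ : Integrable (fun y => ρ y * φ y) ν) {z η : ℝ} (hη : ∀ y ∈ support ρ, |φ y - z| ≤ η) :
    |∫ y, ρ y * φ y ∂ν - z| ≤ η := by
  have hsub : ∫ y, ρ y * φ y ∂ν - z = ∫ y, ρ y * (φ y - z) ∂ν := by
    simp_rw [mul_sub]
    rw [integral_sub hρφ (hρ.integrable.mul_const z), integral_mul_const, hρ.integral_eq_one,
      one_mul]
  rw [hsub, ← Real.norm_eq_abs]
  calc ‖∫ y, ρ y * (φ y - z) ∂ν‖ ≤ ∫ y, ρ y * η ∂ν := by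
        refine norm_integral_le_of_norm_le (hρ.integrable.mul_const η) (ae_of_all _ fun y => ?_)
        by_cases hy : ρ y = 0
        · simp [hy]
        · rw [norm_mul, Real.norm_of_nonneg (hρ.nonneg y), Real.norm_eq_abs]
          exact mul_le_mul_of_nonneg_left (hη y hy) (hρ.nonneg y)
    _ = η := by rw [integral_mul_const, hρ.integral_eq_one, one_mul]

lemma IsProbabilityDensity.prod {Z : Type*} [MeasurableSpace Z] [SFinite ν] {ν' : Measure Z}
    [SFinite ν'] {σ : Z → ℝ} (hρ : IsProbabilityDensity ν ρ) (hσ : IsProbabilityDensity ν' σ) :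
    IsProbabilityDensity (ν.prod ν') (fun p => ρ p.1 * σ p.2) where
  nonneg p := mul_nonneg (hρ.nonneg _) (hσ.nonneg _)
  integrable := hρ.integrable.mul_prod hσ.integrable
  integral_eq_one := by rw [integral_prod_mul, hρ.integral_eq_one, hσ.integral_eq_one, one_mul]

end ProbabilityDensity

section Concentration

variable {ι Y : Type*} [TopologicalSpace Y] {l : Filter ι} {ρ : ι → Y → ℝ} {φ : Y → ℝ} {z : Y}

lemma tendsto_support_mul_prod {Z : Type*} [TopologicalSpace Z] {σ : ι → Z → ℝ} {w : Z}
    (hρ : Tendsto (fun i => support (ρ i)) l (𝓝 z).smallSets)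
    (hσ : Tendsto (fun i => support (σ i)) l (𝓝 w).smallSets) :
    Tendsto (fun i => support fun p : Y × Z => ρ i p.1 * σ i p.2) l (𝓝 (z, w)).smallSets := by
  rw [tendsto_smallSets_iff] at *
  intro U hU
  obtain ⟨u, hu, v, hv, huv⟩ := mem_nhds_prod_iff.1 hU
  filter_upwards [hρ u hu, hσ v hv] with i hρu hσv p hp
  obtain ⟨hp₁, hp₂⟩ := mul_ne_zero_iff.1 hp
  exact huv ⟨hρu hp₁, hσv hp₂⟩

lemma eventually_forall_support_abs_sub_lt
    (hconc : Tendsto (fun i => support (ρ i)) l (𝓝 z).smallSets) (hφ : ContinuousAt φ z)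
    {η : ℝ} (hη : 0 < η) : ∀ᶠ i in l, ∀ y ∈ support (ρ i), |φ y - φ z| < η :=
  hconc.eventually (hφ.eventually (ball_mem_nhds _ hη)).smallSets

variable [MeasurableSpace Y] {ν : Measure Y}

lemma eventually_integrable_mul_of_tendsto_support (hρ : ∀ᶠ i in l, Integrable (ρ i) ν)
    (hconc : Tendsto (fun i => support (ρ i)) l (𝓝 z).smallSets) (hφ : ContinuousAt φ z)
    (hφm : AEStronglyMeasurable φ ν) :
    ∀ᶠ i in l, Integrable (fun y => ρ i y * φ y) ν := by
  filter_upwards [hρ, eventually_forall_support_abs_sub_lt hconc hφ one_pos] with i hi hclose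
  refine hi.mul_of_abs_le_on_support hφm (C := |φ z| + 1) fun y hy => ?_
  linarith [abs_sub_abs_le_abs_sub (φ y) (φ z), hclose y hy]

lemma tendsto_integral_mul_of_tendsto_support (hρ : ∀ᶠ i in l, IsProbabilityDensity ν (ρ i))
    (hconc : Tendsto (fun i => support (ρ i)) l (𝓝 z).smallSets) (hφ : ContinuousAt φ z)
    (hφm : AEStronglyMeasurable φ ν) :
    Tendsto (fun i => ∫ y, ρ i y * φ y ∂ν) l (𝓝 (φ z)) := by
  refine Metric.tendsto_nhds.2 fun η hη => ?_
  filter_upwards [hρ, eventually_integrable_mul_of_tendsto_support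
    (hρ.mono fun _ h => h.integrable) hconc hφ hφm,
    eventually_forall_support_abs_sub_lt hconc hφ (half_pos hη)] with i hρi hint hclose
  rw [Real.dist_eq]
  exact (hρi.abs_integral_mul_sub_le hint fun y hy => (hclose y hy).le).trans_lt
    (half_lt_self hη)

end Concentration

section Bump

variable {X : Type*} [PseudoMetricSpace X] {x : X} {ε : ℝ}

noncomputable def tent (x : X) (ε : ℝ) (a : X) : ℝ := max (1 - dist a x / ε) 0

lemma continuous_tent (x : X) (ε : ℝ) : Continuous (tent x ε) := by
  unfold tent; fun_prop

lemma tent_nonneg (x : X) (ε : ℝ) : 0 ≤ tent x ε := fun _ => le_max_right _ _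

lemma abs_tent_le_one (hε : 0 ≤ ε) (a : X) : |tent x ε a| ≤ 1 := by
  rw [abs_of_nonneg (tent_nonneg x ε a)]
  exact max_le (by linarith [div_nonneg dist_nonneg hε (a := dist a x)]) zero_le_one

lemma support_tent (hε : 0 < ε) : support (tent x ε) = ball x ε := by
  ext a
  simp [tent, mem_support, div_lt_one hε]

variable [MeasurableSpace X] (μ : Measure X)

noncomputable def bump (x : X) (ε : ℝ) (a : X) : ℝ := (∫ b, tent x ε b ∂μ)⁻¹ * tent x ε a

lemma continuous_bump (x : X) (ε : ℝ) : Continuous (bump μ x ε) :=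
  continuous_const.mul (continuous_tent x ε)

lemma support_bump_subset (hε : 0 < ε) : support (bump μ x ε) ⊆ ball x ε :=
  (support_mul_subset_right _ _).trans (support_tent hε).subset

lemma tendsto_support_bump (x : X) :
    Tendsto (fun ε => support (bump μ x ε)) (𝓝[>] 0) (𝓝 x).smallSets := by
  refine tendsto_smallSets_iff.2 fun u hu => ?_
  filter_upwards [nhdsWithin_le_nhds (eventually_closedBall_subset hu), self_mem_nhdsWithin]
    with ε hε hpos
  exact (support_bump_subset μ hpos).trans (ball_subset_closedBall.trans hε)

variable [OpensMeasurableSpace X]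

lemma integrable_tent (hε : 0 < ε) (hμ : μ (ball x ε) < ⊤) : Integrable (tent x ε) μ := by
  rw [← integrableOn_iff_integrable_of_support_subset (support_tent hε).subset]
  exact Measure.integrableOn_of_bounded hμ.ne (continuous_tent x ε).aestronglyMeasurable
    (ae_of_all _ (abs_tent_le_one hε.le))

lemma integral_tent_pos [μ.IsOpenPosMeasure] (hε : 0 < ε) (hμ : μ (ball x ε) < ⊤) :
    0 < ∫ a, tent x ε a ∂μ := by
  rw [integral_pos_iff_support_of_nonneg (tent_nonneg x ε) (integrable_tent μ hε hμ),
    support_tent hε]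
  exact measure_ball_pos μ x hε

lemma isProbabilityDensity_bump [μ.IsOpenPosMeasure] (hε : 0 < ε) (hμ : μ (ball x ε) < ⊤) :
    IsProbabilityDensity μ (bump μ x ε) where
  nonneg a := mul_nonneg (inv_nonneg.2 (integral_tent_pos μ hε hμ).le) (tent_nonneg x ε a)
  integrable := (integrable_tent μ hε hμ).const_mul _
  integral_eq_one := by
    simp only [bump]
    rw [integral_const_mul, inv_mul_cancel₀ (integral_tent_pos μ hε hμ).ne']

lemma eventually_isProbabilityDensity_bump [IsLocallyFiniteMeasure μ] [μ.IsOpenPosMeasure]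
    (x : X) : ∀ᶠ ε in 𝓝[>] 0, IsProbabilityDensity μ (bump μ x ε) := by
  obtain ⟨s, hs, hμs⟩ := μ.finiteAt_nhds x
  filter_upwards [nhdsWithin_le_nhds (eventually_closedBall_subset hs), self_mem_nhdsWithin]
    with ε hε hpos
  exact isProbabilityDensity_bump μ hpos
    ((measure_mono (ball_subset_closedBall.trans hε)).trans_lt hμs)

end Bump

lemma sum_smul_dotProduct_mulVec_sum_smul {ι m : Type*} [Fintype ι] [Fintype m]
    (M : Matrix m m ℝ) (s t : ι → ℝ) (c : ι → m → ℝ) :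
    (∑ i, s i • c i) ⬝ᵥ (M *ᵥ ∑ j, t j • c j) = ∑ i, ∑ j, s i * t j * (c i ⬝ᵥ (M *ᵥ c j)) := by
  simp only [sum_dotProduct, mulVec_sum, dotProduct_sum, mulVec_smul, smul_dotProduct,
    dotProduct_smul, smul_eq_mul, Finset.mul_sum]
  rw [Finset.sum_comm]
  simp only [mul_assoc, mul_left_comm (t _)]

lemma integral_integral_sum_smul_dotProduct_mulVec {X ι m : Type*} [MeasurableSpace X]
    [Fintype ι] [Fintype m] (μ : Measure X) [SFinite μ] (K : X → X → Matrix m m ℝ)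
    (g : ι → X → ℝ) (c : ι → m → ℝ)
    (hint : ∀ i j, Integrable (fun p : X × X => g i p.1 * g j p.2 * (c i ⬝ᵥ (K p.1 p.2 *ᵥ c j)))
      (μ.prod μ)) :
    ∫ a, ∫ b, (∑ i, g i a • c i) ⬝ᵥ (K a b *ᵥ ∑ j, g j b • c j) ∂μ ∂μ =
      ∑ i, ∑ j, ∫ p : X × X, g i p.1 * g j p.2 * (c i ⬝ᵥ (K p.1 p.2 *ᵥ c j)) ∂μ.prod μ := by
  simp_rw [sum_smul_dotProduct_mulVec_sum_smul]
  have hint' : ∀ i, Integrable (fun p : X × X =>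
      ∑ j, g i p.1 * g j p.2 * (c i ⬝ᵥ (K p.1 p.2 *ᵥ c j))) (μ.prod μ) :=
    fun i => integrable_finsetSum _ fun j _ => hint i j
  rw [← integral_prod _ (integrable_finsetSum _ fun i _ => hint' i), integral_finsetSum _
    fun i _ => hint' i]
  exact Finset.sum_congr rfl fun i _ => integral_finsetSum _ fun j _ => hint i j

theorem stmt_11_general {X : Type*} [MetricSpace X] [TopologicalSpace.SeparableSpace X]
    [MeasurableSpace X] [BorelSpace X]
    (μ : Measure X) [IsLocallyFiniteMeasure μ]
    (hsupp : ∀ U : Set X, IsOpen U → U.Nonempty → 0 < μ U)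
    {N : ℕ} (K : X → X → Matrix (Fin N) (Fin N) ℝ)
    (hKcont : Continuous (fun p : X × X => K p.1 p.2))
    (hipd : ∀ f : X → EuclideanSpace ℝ (Fin N), Continuous f → Integrable f μ →
      0 ≤ ∫ x, ∫ y, (f x) ⬝ᵥ ((K x y) *ᵥ (f y)) ∂μ ∂μ) :
    ∀ (n : ℕ) (x : Fin n → X) (c : Fin n → Fin N → ℝ),
      0 ≤ ∑ i : Fin n, ∑ j : Fin n, c i ⬝ᵥ ((K (x i) (x j)) *ᵥ c j) := by
  intro n x c
  have : μ.IsOpenPosMeasure := ⟨fun U hU hne => (hsupp U hU hne).ne'⟩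
  set φ : Fin n → Fin n → X × X → ℝ := fun i j p => c i ⬝ᵥ (K p.1 p.2 *ᵥ c j)
  have hφ : ∀ i j, Continuous (φ i j) := fun i j =>
    continuous_const.dotProduct (hKcont.matrix_mulVec continuous_const)
  have hbump := eventually_all.2 fun i => eventually_isProbabilityDensity_bump μ (x i)
  have hconc : ∀ i j, Tendsto (fun ε => support fun p : X × X =>
      bump μ (x i) ε p.1 * bump μ (x j) ε p.2) (𝓝[>] 0) (𝓝 (x i, x j)).smallSets :=
    fun i j => tendsto_support_mul_prod (tendsto_support_bump μ (x i))
      (tendsto_support_bump μ (x j))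
  have hlim := tendsto_finsetSum Finset.univ fun i _ => tendsto_finsetSum Finset.univ fun j _ =>
    tendsto_integral_mul_of_tendsto_support (hbump.mono fun _ h => (h i).prod (h j))
      (hconc i j) (hφ i j).continuousAt (hφ i j).aestronglyMeasurable
  refine ge_of_tendsto hlim ?_
  have hint := eventually_all.2 fun i => eventually_all.2 fun j =>
    eventually_integrable_mul_of_tendsto_support
      (hbump.mono fun _ h => ((h i).prod (h j)).integrable) (hconc i j) (hφ i j).continuousAt
      (hφ i j).aestronglyMeasurable
  filter_upwards [hbump, hint] with ε hε hεint
  rw [← integral_integral_sum_smul_dotProduct_mulVec μ K _ c hεint]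
  simpa using hipd (fun a => ∑ i, bump μ (x i) ε a • WithLp.toLp 2 (c i))
    (continuous_finsetSum _ fun i _ => (continuous_bump μ (x i) ε).smul continuous_const)
    (integrable_finsetSum _ fun i _ => (hε i).integrable.smul_const _)

theorem stmt_11 {X : Type*} [MetricSpace X] [TopologicalSpace.SeparableSpace X]
    [MeasurableSpace X] [BorelSpace X]
    (μ : Measure X) [IsLocallyFiniteMeasure μ]
    (hsupp : ∀ U : Set X, IsOpen U → U.Nonempty → 0 < μ U)
    {N : ℕ} (hN : 1 ≤ N) (K : X → X → Matrix (Fin N) (Fin N) ℝ)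
    (hKcont : Continuous (fun p : X × X => K p.1 p.2))
    (hKbdd : ∃ C : ℝ, ∀ x y : X, frobNorm (K x y) ≤ C)
    (hsym : ∀ x y : X, K x y = (K y x)ᵀ)
    (hipd : ∀ f : X → EuclideanSpace ℝ (Fin N), Continuous f → Integrable f μ →
      0 ≤ ∫ x, ∫ y, (f x) ⬝ᵥ ((K x y) *ᵥ (f y)) ∂μ ∂μ) :
    ∀ (n : ℕ) (x : Fin n → X) (c : Fin n → Fin N → ℝ),
      0 ≤ ∑ i : Fin n, ∑ j : Fin n, c i ⬝ᵥ ((K (x i) (x j)) *ᵥ c j) :=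
  stmt_11_general μ hsupp K hKcont hipd
end

section
/- Let X be a separable metric space with a locally finite Borel measure μ with support X, N ≥ 1, and K : X × X → ℝ^{N×N} bounded, continuous, with K(x,y) = K(y,x)ᵀ. If K is positive definite (∑_{i,j} cᵢᵀ K(xᵢ,xⱼ) cⱼ ≥ 0 for all finite families of points and vectors), then K is integrally positive definite with respect to L¹(X,ℝ^N): ∫_X∫_X f(x)ᵀ K(x,y) f(y) dμ(x) dμ(y) ≥ 0 for all f ∈ L¹(X, ℝ^N). -/
open MeasureTheory Matrix

/-!
View the matrix kernel as a bounded, continuous family `Φ x y` of bilinear forms. Quantize `X`: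
the nearest-point maps onto the first `n` terms of a dense sequence are simple functions `qₙ`
converging pointwise to the identity. Along `qₙ` the double integral of `Φ x y (g x) (g y)`
collapses to the finite quadratic form `∑ a b, Φ a b (cₐ) (c_b)`, where `cₐ` is the integral of
`g` over the fibre `qₙ⁻¹{a}`, so it is nonnegative by positive definiteness. Dominated
convergence, applied in each variable separately, passes to the limit.
-/

open Filter Topology TopologicalSpace

section

variable {X Y E F : Type*}
  [NormedAddCommGroup E] [NormedSpace ℝ E] [NormedAddCommGroup F] [NormedSpace ℝ F]

def IsPosDefKernel (Φ : Y → Y → E →L[ℝ] E →L[ℝ] ℝ) : Prop :=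
  ∀ (n : ℕ) (x : Fin n → Y) (c : Fin n → E), 0 ≤ ∑ i, ∑ j, Φ (x i) (x j) (c i) (c j)

namespace IsPosDefKernel

variable {Φ : Y → Y → E →L[ℝ] E →L[ℝ] ℝ}

theorem sum_nonneg (hΦ : IsPosDefKernel Φ) {ι : Type*} [Fintype ι] (x : ι → Y) (c : ι → E) :
    0 ≤ ∑ i, ∑ j, Φ (x i) (x j) (c i) (c j) := by
  let e := (Fintype.equivFin ι).symm
  exact (hΦ _ (x ∘ e) (c ∘ e)).trans_eq
    (Fintype.sum_equiv e _ _ fun i => Fintype.sum_equiv e _ _ fun j => rfl)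

theorem sum_finset_nonneg (hΦ : IsPosDefKernel Φ) (s : Finset Y) (c : Y → E) :
    0 ≤ ∑ a ∈ s, ∑ b ∈ s, Φ a b (c a) (c b) := by
  rw [← Finset.sum_coe_sort s]
  exact (hΦ.sum_nonneg ((↑) : s → Y) (c ∘ (↑))).trans_eq
    (Finset.sum_congr rfl fun a _ => Finset.sum_coe_sort s fun b => Φ a b (c a) (c b))

end IsPosDefKernel

namespace MeasureTheory.SimpleFunc

variable [MeasurableSpace X] {μ : Measure X}

theorem aestronglyMeasurable_apply_comp (q : SimpleFunc X Y) (Ψ : Y → E →L[ℝ] F) {g : X → E}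
    (hg : AEStronglyMeasurable g μ) : AEStronglyMeasurable (fun x => Ψ (q x) (g x)) μ :=
  (ContinuousLinearMap.id ℝ (E →L[ℝ] F)).aestronglyMeasurable_comp₂
    (q.map Ψ).stronglyMeasurable.aestronglyMeasurable hg

theorem integral_apply_comp [CompleteSpace E] [CompleteSpace F] (q : SimpleFunc X Y)
    (Ψ : Y → E →L[ℝ] F) {g : X → E} (hg : Integrable g μ) :
    ∫ x, Ψ (q x) (g x) ∂μ = ∑ b ∈ q.range, Ψ b (∫ x in q ⁻¹' {b}, g x ∂μ) := by
  classical
  have hsplit : ∀ x, Ψ (q x) (g x) =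
      ∑ b ∈ q.range, (q ⁻¹' {b}).indicator (fun x => Ψ b (g x)) x := by
    intro x
    rw [Finset.sum_eq_single_of_mem (q x) (q.mem_range_self x)]
    · simp
    · exact fun b _ hb => Set.indicator_of_notMem (fun h => hb h.symm) _
  rw [funext hsplit, integral_finsetSum _ fun b _ =>
    ((Ψ b).integrable_comp hg).indicator (q.measurableSet_fiber b)]
  refine Finset.sum_congr rfl fun b _ => ?_
  rw [integral_indicator (q.measurableSet_fiber b), (Ψ b).integral_comp_comm hg.integrableOn]

theorem integral_bilin_comp_right [CompleteSpace F] (q : SimpleFunc X Y)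
    (Φ : Y → Y → E →L[ℝ] F →L[ℝ] ℝ) {h : X → F} (hh : Integrable h μ) (a : Y) (v : E) :
    ∫ y, Φ a (q y) v (h y) ∂μ =
      (∑ b ∈ q.range, (Φ a b).flip (∫ y in q ⁻¹' {b}, h y ∂μ)) v := by
  rw [q.integral_apply_comp (fun b => Φ a b v) hh]
  simp

theorem integral_integral_bilin_comp [CompleteSpace E] [CompleteSpace F] (q : SimpleFunc X Y)
    (Φ : Y → Y → E →L[ℝ] F →L[ℝ] ℝ) {g : X → E} {h : X → F}
    (hg : Integrable g μ) (hh : Integrable h μ) :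
    ∫ x, ∫ y, Φ (q x) (q y) (g x) (h y) ∂μ ∂μ =
      ∑ a ∈ q.range, ∑ b ∈ q.range,
        Φ a b (∫ x in q ⁻¹' {a}, g x ∂μ) (∫ y in q ⁻¹' {b}, h y ∂μ) := by
  simp_rw [q.integral_bilin_comp_right Φ hh]
  rw [q.integral_apply_comp
    (fun a => ∑ b ∈ q.range, (Φ a b).flip (∫ y in q ⁻¹' {b}, h y ∂μ)) hg]
  simp

end MeasureTheory.SimpleFunc

theorem tendsto_integral_integral_bilin_comp [TopologicalSpace X] [MeasurableSpace X]
    {μ : Measure X} [CompleteSpace F] {Φ : X → X → E →L[ℝ] F →L[ℝ] ℝ} {C : ℝ}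
    (hΦC : ∀ x y, ‖Φ x y‖ ≤ C) (hΦ : ∀ v w, Continuous fun p : X × X => Φ p.1 p.2 v w)
    {q : ℕ → SimpleFunc X X} (hq : ∀ x, Tendsto (fun n => q n x) atTop (𝓝 x))
    {g : X → E} {h : X → F} (hg : Integrable g μ) (hh : Integrable h μ) :
    Tendsto (fun n => ∫ x, ∫ y, Φ (q n x) (q n y) (g x) (h y) ∂μ ∂μ) atTop
      (𝓝 (∫ x, ∫ y, Φ x y (g x) (h y) ∂μ ∂μ)) := by
  have hbound : ∀ x y v w, ‖Φ x y v w‖ ≤ C * ‖v‖ * ‖w‖ := fun x y v w =>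
    (Φ x y).le_of_opNorm₂_le_of_le (hΦC x y) le_rfl le_rfl
  have hinner : ∀ x, Tendsto (fun n => ∫ y, Φ (q n x) (q n y) (g x) (h y) ∂μ) atTop
      (𝓝 (∫ y, Φ x y (g x) (h y) ∂μ)) := fun x =>
    tendsto_integral_of_dominated_convergence (fun y => C * ‖g x‖ * ‖h y‖)
      (fun n => (q n).aestronglyMeasurable_apply_comp (fun b => Φ (q n x) b (g x)) hh.1)
      (hh.norm.const_mul _) (fun n => ae_of_all _ fun y => hbound _ _ _ _)
      (ae_of_all _ fun y => ((hΦ (g x) (h y)).tendsto (x, y)).comp ((hq x).prodMk_nhds (hq y)))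
  refine tendsto_integral_of_dominated_convergence (fun x => C * ‖g x‖ * ∫ y, ‖h y‖ ∂μ)
    (fun n => ?_) ((hg.norm.const_mul C).mul_const _) (fun n => ae_of_all _ fun x => ?_)
    (ae_of_all _ hinner)
  · simp_rw [(q n).integral_bilin_comp_right Φ hh]
    exact (q n).aestronglyMeasurable_apply_comp
      (fun a => ∑ b ∈ (q n).range, (Φ a b).flip (∫ y in q n ⁻¹' {b}, h y ∂μ)) hg.1
  · rw [← integral_const_mul]
    exact norm_integral_le_of_norm_le (hh.norm.const_mul _) (ae_of_all _ fun y => hbound _ _ _ _)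

namespace IsPosDefKernel

variable [MeasurableSpace X] {μ : Measure X} [CompleteSpace E]

theorem integral_integral_comp_nonneg {Φ : Y → Y → E →L[ℝ] E →L[ℝ] ℝ} (hpd : IsPosDefKernel Φ)
    (q : SimpleFunc X Y) {g : X → E} (hg : Integrable g μ) :
    0 ≤ ∫ x, ∫ y, Φ (q x) (q y) (g x) (g y) ∂μ ∂μ := by
  rw [q.integral_integral_bilin_comp Φ hg hg]
  exact hpd.sum_finset_nonneg _ _

theorem integral_integral_nonneg [PseudoEMetricSpace X] [SeparableSpace X]
    [OpensMeasurableSpace X] {Φ : X → X → E →L[ℝ] E →L[ℝ] ℝ} (hpd : IsPosDefKernel Φ) {C : ℝ}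
    (hΦC : ∀ x y, ‖Φ x y‖ ≤ C) (hΦ : ∀ v w, Continuous fun p : X × X => Φ p.1 p.2 v w)
    {g : X → E} (hg : Integrable g μ) :
    0 ≤ ∫ x, ∫ y, Φ x y (g x) (g y) ∂μ ∂μ := by
  rcases isEmpty_or_nonempty X with hX | hX
  · simp [integral_of_isEmpty]
  have hq : ∀ x, Tendsto (fun n => SimpleFunc.nearestPt (denseSeq X) n x) atTop (𝓝 x) :=
    fun x => SimpleFunc.tendsto_nearestPt ((denseRange_denseSeq X).closure_range ▸ Set.mem_univ x)
  exact ge_of_tendsto' (tendsto_integral_integral_bilin_comp hΦC hΦ hq hg hg)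
    fun n => hpd.integral_integral_comp_nonneg _ hg

end IsPosDefKernel

end

namespace Matrix

variable {n : Type*} [Fintype n] [DecidableEq n]

noncomputable def toContinuousLinearMap₂' (A : Matrix n n ℝ) :
    (n → ℝ) →L[ℝ] (n → ℝ) →L[ℝ] ℝ :=
  (Matrix.toLinearMap₂' ℝ A).toContinuousBilinearMap

@[simp]
theorem toContinuousLinearMap₂'_apply (A : Matrix n n ℝ) (v w : n → ℝ) :
    A.toContinuousLinearMap₂' v w = v ⬝ᵥ (A *ᵥ w) :=
  Matrix.toLinearMap₂'_apply' A v w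

theorem norm_toContinuousLinearMap₂'_le (A : Matrix n n ℝ) :
    ‖A.toContinuousLinearMap₂'‖ ≤ ∑ i, ∑ j, |A i j| := by
  refine ContinuousLinearMap.opNorm_le_bound₂ _ (by positivity) fun v w => ?_
  rw [toContinuousLinearMap₂'_apply, Real.norm_eq_abs]
  simp only [dotProduct, mulVec, Finset.mul_sum, Finset.sum_mul]
  refine (Finset.abs_sum_le_sum_abs _ _).trans (Finset.sum_le_sum fun i _ => ?_)
  refine (Finset.abs_sum_le_sum_abs _ _).trans (Finset.sum_le_sum fun j _ => ?_)
  rw [abs_mul, abs_mul, mul_left_comm, mul_assoc]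
  exact mul_le_mul_of_nonneg_left (mul_le_mul (norm_le_pi_norm v i) (norm_le_pi_norm w j)
    (abs_nonneg _) (norm_nonneg _)) (abs_nonneg _)

end Matrix

theorem abs_le_frobNorm {N : ℕ} (A : Matrix (Fin N) (Fin N) ℝ) (i j : Fin N) :
    |A i j| ≤ frobNorm A := by
  rw [frobNorm, ← Real.sqrt_sq_eq_abs]
  refine Real.sqrt_le_sqrt ?_
  calc A i j ^ 2 ≤ ∑ j', A i j' ^ 2 :=
        Finset.single_le_sum (fun j' _ => sq_nonneg (A i j')) (Finset.mem_univ j)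
    _ ≤ ∑ i', ∑ j', A i' j' ^ 2 :=
        Finset.single_le_sum (f := fun i' => ∑ j', A i' j' ^ 2)
          (fun i' _ => Finset.sum_nonneg fun j' _ => sq_nonneg _) (Finset.mem_univ i)

theorem stmt_12_general {X : Type*} [MetricSpace X] [TopologicalSpace.SeparableSpace X]
    [MeasurableSpace X] [BorelSpace X]
    (μ : Measure X)
    {N : ℕ} (K : X → X → Matrix (Fin N) (Fin N) ℝ)
    (hKcont : Continuous (fun p : X × X => K p.1 p.2))
    (hKbdd : ∃ C : ℝ, ∀ x y : X, frobNorm (K x y) ≤ C)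
    (hpd : ∀ (n : ℕ) (x : Fin n → X) (c : Fin n → Fin N → ℝ),
      0 ≤ ∑ i : Fin n, ∑ j : Fin n, c i ⬝ᵥ ((K (x i) (x j)) *ᵥ c j)) :
    ∀ f : X → EuclideanSpace ℝ (Fin N), Integrable f μ →
      0 ≤ ∫ x, ∫ y, (f x) ⬝ᵥ ((K x y) *ᵥ (f y)) ∂μ ∂μ := by
  intro f hf
  obtain ⟨C, hC⟩ := hKbdd
  have hΦC : ∀ x y, ‖(K x y).toContinuousLinearMap₂'‖ ≤ ∑ _i : Fin N, ∑ _j : Fin N, C :=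
    fun x y => (K x y).norm_toContinuousLinearMap₂'_le.trans <| Finset.sum_le_sum fun i _ =>
      Finset.sum_le_sum fun j _ => (abs_le_frobNorm _ i j).trans (hC x y)
  have hΦ : ∀ v w : Fin N → ℝ,
      Continuous fun p : X × X => (K p.1 p.2).toContinuousLinearMap₂' v w := fun v w => by
    simpa using continuous_const.dotProduct (hKcont.matrix_mulVec continuous_const)
  have hPD : IsPosDefKernel fun x y => (K x y).toContinuousLinearMap₂' := fun n x c => by
    simpa using hpd n x c
  have hg : Integrable (fun x => WithLp.ofLp (f x)) μ :=
    (PiLp.continuousLinearEquiv 2 ℝ _).toContinuousLinearMap.integrable_comp hf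
  simpa using hPD.integral_integral_nonneg hΦC hΦ hg

theorem stmt_12 {X : Type*} [MetricSpace X] [TopologicalSpace.SeparableSpace X]
    [MeasurableSpace X] [BorelSpace X]
    (μ : Measure X) [IsLocallyFiniteMeasure μ]
    (hsupp : ∀ U : Set X, IsOpen U → U.Nonempty → 0 < μ U)
    {N : ℕ} (hN : 1 ≤ N) (K : X → X → Matrix (Fin N) (Fin N) ℝ)
    (hKcont : Continuous (fun p : X × X => K p.1 p.2))
    (hKbdd : ∃ C : ℝ, ∀ x y : X, frobNorm (K x y) ≤ C)
    (hsym : ∀ x y : X, K x y = (K y x)ᵀ)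
    (hpd : ∀ (n : ℕ) (x : Fin n → X) (c : Fin n → Fin N → ℝ),
      0 ≤ ∑ i : Fin n, ∑ j : Fin n, c i ⬝ᵥ ((K (x i) (x j)) *ᵥ c j)) :
    ∀ f : X → EuclideanSpace ℝ (Fin N), Integrable f μ →
      0 ≤ ∫ x, ∫ y, (f x) ⬝ᵥ ((K x y) *ᵥ (f y)) ∂μ ∂μ :=
  stmt_12_general μ K hKcont hKbdd hpd
end
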